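/- Let 0 < R < 1 and let Ω' := {x ∈ ℝ² : R < |x| < 1, x₂ > 0} be the open upper half-annulus. Then Ω' has no necks of any radius: for every r > 0 and all points x_0, x_1 ∈ ℝ² with B_r(x_0) ⊆ Ω' and B_r(x_1) ⊆ Ω', there exists a continuous curve γ : [0,1] → Ω' with γ(0) = x_0, γ(1) = x_1, and B_r(γ(t)) ⊆ Ω' for all t ∈ [0,1]. (For r > (1−R)/2 the hypothesis is vacuous since Ω' contains no ball of radius r.) -/

import Mathlib

open MeasureTheory Metric Set Filter Topology
open scoped ENNReal symmDiff

noncomputable section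

abbrev EucSp (N : ℕ) := EuclideanSpace ℝ (Fin N)

/-- `E` has Lebesgue density `α` at `x`. -/
def HasDensity {N : ℕ} (E : Set (EucSp N)) (x : EucSp N) (α : ℝ) : Prop :=
  Tendsto (fun r : ℝ => volume (E ∩ ball x r) / volume (ball x r))
    (𝓝[>] (0:ℝ)) (𝓝 (ENNReal.ofReal α))

/-- The essential boundary `∂^e E = ℝ^N \ (E^{(0)} ∪ E^{(1)})`. -/
def essBdry {N : ℕ} (E : Set (EucSp N)) : Set (EucSp N) :=
  {x | ¬ HasDensity E x 0 ∧ ¬ HasDensity E x 1}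

/-- Perimeter `P(E) = ℋ^{N-1}(∂^e E)`. -/
def perim {N : ℕ} (E : Set (EucSp N)) : ℝ≥0∞ := μH[(N:ℝ) - 1] (essBdry E)

/-- Relative perimeter `P(E; A) = ℋ^{N-1}(∂^e E ∩ A)`. -/
def relPerim {N : ℕ} (E A : Set (EucSp N)) : ℝ≥0∞ := μH[(N:ℝ) - 1] (essBdry E ∩ A)

/-- The Cheeger constant `h₁(Ω)`. -/
def cheeger {N : ℕ} (Ω : Set (EucSp N)) : ℝ≥0∞ :=
  ⨅ (E : Set (EucSp N)) (_ : E ⊆ Ω) (_ : MeasurableSet E) (_ : 0 < volume E),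
    perim E / volume E

/-- Admissible `k`-tuples: pairwise disjoint measurable subsets of `Ω` of positive measure. -/
def AdmissibleTuple {N : ℕ} (Ω : Set (EucSp N)) {k : ℕ} (E : Fin k → Set (EucSp N)) : Prop :=
  (∀ i, E i ⊆ Ω) ∧ (∀ i, MeasurableSet (E i)) ∧ (∀ i, 0 < volume (E i)) ∧
    (∀ i j, i ≠ j → Disjoint (E i) (E j))

/-- The `k`-th Cheeger constant `h_k(Ω)`. -/
def cheegerK {N : ℕ} (k : ℕ) (Ω : Set (EucSp N)) : ℝ≥0∞ :=
  ⨅ (E : Fin k → Set (EucSp N)) (_ : AdmissibleTuple Ω E),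
    ⨆ i, perim (E i) / volume (E i)

/-- A Cheeger `k`-tuple of `Ω`: an admissible tuple attaining `h_k(Ω)`. -/
def IsCheegerTuple {N : ℕ} (Ω : Set (EucSp N)) {k : ℕ} (E : Fin k → Set (EucSp N)) : Prop :=
  AdmissibleTuple Ω E ∧ (⨆ i, perim (E i) / volume (E i)) = cheegerK k Ω

/-- `n`-adjusted Cheeger `k`-tuples. -/
def IsAdjusted {N : ℕ} : ℕ → Set (EucSp N) → (k : ℕ) → (Fin k → Set (EucSp N)) → Prop
  | 0, Ω, _, E => IsCheegerTuple Ω E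
  | 1, Ω, _, E => IsCheegerTuple Ω E ∧
      ∀ i, cheeger (Ω \ ⋃ j, ⋃ (_ : j ≠ i), E j) = cheeger (E i) ∧
        cheeger (E i) = perim (E i) / volume (E i)
  | (n+2), Ω, k, E => IsAdjusted (n+1) Ω k E ∧
      ∀ σ : Fin (n+2) ↪ Fin k,
        IsAdjusted (n+1) (Ω \ ⋃ j, ⋃ (_ : j ∉ Set.range σ), E j) (n+2) (E ∘ σ)


/-- The open annulus `{R < |x| < 1}` in `ℝ²`. -/
def ann (R : ℝ) : Set (EucSp 2) := {x | R < ‖x‖ ∧ ‖x‖ < 1}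

/-- The open upper half-annulus `Ω' = {R < |x| < 1, x₂ > 0}` in `ℝ²`. -/
def halfAnn (R : ℝ) : Set (EucSp 2) := {x | R < ‖x‖ ∧ ‖x‖ < 1 ∧ 0 < x 1}

/-- The inner parallel set `[Ω']^r` of the upper half-annulus at distance `r`. -/
def innerPar (R r : ℝ) : Set (EucSp 2) :=
  {x ∈ halfAnn R | r ≤ Metric.infDist x (frontier (halfAnn R))}

/-- The set `𝒪_r` obtained by rolling a disc of radius `r` inside the upper half-annulus,
with the convention `𝒪_0 = Ω'`. -/
def Oset (R r : ℝ) : Set (EucSp 2) :=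
  if r = 0 then halfAnn R else ⋃ x ∈ innerPar R r, ball x r

private def e2 : EucSp 2 := EuclideanSpace.single 1 (1:ℝ)

private lemma e2_apply : e2 1 = 1 := by simp [e2]

private lemma norm_e2 : ‖e2‖ = 1 := by simp [e2]

private lemma coord_le_norm (x : EucSp 2) (i : Fin 2) : |x i| ≤ ‖x‖ := by
  have h := abs_real_inner_le_norm (EuclideanSpace.single i (1:ℝ)) x
  simpa [EuclideanSpace.inner_single_left] using h

private def GSet (R r : ℝ) : Set (EucSp 2) :=
  {z | R + r ≤ ‖z‖ ∧ ‖z‖ ≤ 1 - r ∧ r ≤ z 1}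

private lemma ball_subset_halfAnn {R r : ℝ} {x : EucSp 2}
    (hx : x ∈ GSet R r) : ball x r ⊆ halfAnn R := by
  obtain ⟨h1, h2, h3⟩ := hx
  intro y hy
  rw [mem_ball, dist_eq_norm] at hy
  have hn1 : ‖x‖ - ‖y‖ ≤ ‖y - x‖ := by
    calc ‖x‖ - ‖y‖ ≤ |‖x‖ - ‖y‖| := le_abs_self _
      _ = |‖y‖ - ‖x‖| := (abs_sub_comm _ _)
      _ ≤ ‖y - x‖ := abs_norm_sub_norm_le _ _
  have hn2 : ‖y‖ - ‖x‖ ≤ ‖y - x‖ := by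
    calc ‖y‖ - ‖x‖ ≤ |‖y‖ - ‖x‖| := le_abs_self _
      _ ≤ ‖y - x‖ := abs_norm_sub_norm_le _ _
  have hc : |y 1 - x 1| ≤ ‖y - x‖ := by
    have := coord_le_norm (y - x) 1
    simpa [PiLp.sub_apply] using this
  have hc' : x 1 - y 1 ≤ ‖y - x‖ := by
    have := neg_abs_le (y 1 - x 1); linarith [hc]
  exact ⟨by linarith, by linarith, by linarith⟩

private lemma halfAnn_ball_cond {R r : ℝ} (hR0 : 0 < R) (hr : 0 < r) {x : EucSp 2}
    (h : ball x r ⊆ halfAnn R) : x ∈ GSet R r := by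
  have hx : x ∈ halfAnn R := h (mem_ball_self hr)
  obtain ⟨hxR, hxlt, hx1⟩ := hx
  have hxn : (0:ℝ) < ‖x‖ := lt_trans hR0 hxR
  -- r ≤ x 1
  have h3 : r ≤ x 1 := by
    by_contra hcon
    push_neg at hcon
    set c := (x 1 + r) / 2 with hc
    have hc0 : 0 < c := by positivity
    have hcr : c < r := by simp only [hc]; linarith
    have hmem : x - c • e2 ∈ halfAnn R := by
      apply h
      rw [mem_ball, dist_eq_norm]
      have : x - c • e2 - x = -(c • e2) := by abel
      rw [this, norm_neg, norm_smul, norm_e2, mul_one, Real.norm_eq_abs,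
        abs_of_pos hc0]
      exact hcr
    have := hmem.2.2
    have hcoord : (x - c • e2) 1 = x 1 - c := by
      simp [PiLp.sub_apply, PiLp.smul_apply, e2_apply, smul_eq_mul]
    rw [hcoord] at this
    simp only [hc] at this; linarith
  -- ‖x‖ ≤ 1 - r
  have h2 : ‖x‖ ≤ 1 - r := by
    by_contra hcon
    push_neg at hcon
    set c := (1 - ‖x‖ + r) / 2 with hc
    have hc0 : 0 < c := by simp only [hc]; linarith
    have hcr : c < r := by simp only [hc]; linarith
    have hmem : (1 + c / ‖x‖) • x ∈ halfAnn R := by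
      apply h
      rw [mem_ball, dist_eq_norm]
      have : (1 + c / ‖x‖) • x - x = (c / ‖x‖) • x := by
        rw [add_smul, one_smul]; abel
      rw [this, norm_smul, Real.norm_eq_abs, abs_of_pos (by positivity),
        div_mul_cancel₀ _ (ne_of_gt hxn)]
      exact hcr
    have := hmem.2.1
    rw [norm_smul, Real.norm_eq_abs, abs_of_pos (by positivity)] at this
    have hx1c : (1 + c / ‖x‖) * ‖x‖ = ‖x‖ + c := by
      field_simp
    rw [hx1c] at this
    simp only [hc] at this; linarith
  -- R + r ≤ ‖x‖
  have h1 : R + r ≤ ‖x‖ := by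
    by_contra hcon
    push_neg at hcon
    set c := (r + ‖x‖ - R) / 2 with hc
    have hc0 : 0 < c := by simp only [hc]; linarith
    have hcr : c < r := by simp only [hc]; linarith
    have hmem : (1 - c / ‖x‖) • x ∈ halfAnn R := by
      apply h
      rw [mem_ball, dist_eq_norm]
      have : (1 - c / ‖x‖) • x - x = -((c / ‖x‖) • x) := by
        rw [sub_smul, one_smul]; abel
      rw [this, norm_neg, norm_smul, Real.norm_eq_abs, abs_of_pos (by positivity),
        div_mul_cancel₀ _ (ne_of_gt hxn)]
      exact hcr
    have hpos := hmem.2.2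
    have hcoord : ((1 - c / ‖x‖) • x) 1 = (1 - c / ‖x‖) * x 1 := by
      simp [PiLp.smul_apply, smul_eq_mul]
    rw [hcoord] at hpos
    have hx1pos : 0 < x 1 := lt_of_lt_of_le hr h3
    have hfac : 0 < 1 - c / ‖x‖ := by
      by_contra hf; push_neg at hf
      nlinarith
    have hRlt := hmem.1
    rw [norm_smul, Real.norm_eq_abs, abs_of_pos hfac] at hRlt
    have heq : (1 - c / ‖x‖) * ‖x‖ = ‖x‖ - c := by field_simp
    rw [heq] at hRlt
    simp only [hc] at hRlt; linarith
  exact ⟨h1, h2, h3⟩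

private def wFun (x : EucSp 2) (t : ℝ) : EucSp 2 :=
  (1 - t) • x + (t * ‖x‖) • e2

private lemma wFun_apply (x : EucSp 2) (t : ℝ) :
    wFun x t 1 = (1 - t) * x 1 + t * ‖x‖ := by
  simp [wFun, PiLp.add_apply, PiLp.smul_apply, e2_apply, smul_eq_mul]

private lemma coord_le_norm' (x : EucSp 2) (i : Fin 2) : x i ≤ ‖x‖ :=
  le_trans (le_abs_self _) (coord_le_norm x i)

private lemma wFun_coord_ge (x : EucSp 2) {t : ℝ} (h0 : 0 ≤ t) (h1 : t ≤ 1) :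
    x 1 ≤ wFun x t 1 := by
  rw [wFun_apply]
  have := coord_le_norm' x 1
  nlinarith

private lemma wFun_norm_le (x : EucSp 2) {t : ℝ} (h0 : 0 ≤ t) (h1 : t ≤ 1) :
    ‖wFun x t‖ ≤ ‖x‖ := by
  calc ‖wFun x t‖ ≤ ‖(1 - t) • x‖ + ‖(t * ‖x‖) • e2‖ := norm_add_le _ _
    _ = (1 - t) * ‖x‖ + t * ‖x‖ := by
        rw [norm_smul, norm_smul, norm_e2, mul_one, Real.norm_eq_abs, Real.norm_eq_abs,
          abs_of_nonneg (by linarith), abs_of_nonneg (mul_nonneg h0 (norm_nonneg x))]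
    _ = ‖x‖ := by ring

private lemma wFun_norm_pos (x : EucSp 2) (hx : 0 < x 1) {t : ℝ} (h0 : 0 ≤ t) (h1 : t ≤ 1) :
    0 < ‖wFun x t‖ :=
  lt_of_lt_of_le (lt_of_lt_of_le hx (wFun_coord_ge x h0 h1)) (coord_le_norm' _ 1)

private def swingFun (x : EucSp 2) (t : ℝ) : EucSp 2 :=
  (‖x‖ / ‖wFun x t‖) • wFun x t

private lemma swing_path {R r : ℝ} (hR0 : 0 < R) (hr : 0 < r) {x : EucSp 2}
    (hx : x ∈ GSet R r) :
    ∃ p : Path x (‖x‖ • e2), range p ⊆ GSet R r := by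
  obtain ⟨h1, h2, h3⟩ := hx
  have hx1 : 0 < x 1 := lt_of_lt_of_le hr h3
  have hxn : (0:ℝ) < ‖x‖ := lt_of_lt_of_le (by linarith) h1
  have hwpos : ∀ t : unitInterval, 0 < ‖wFun x ↑t‖ := fun t =>
    wFun_norm_pos x hx1 t.2.1 t.2.2
  have hcont : Continuous fun t : unitInterval => swingFun x ↑t := by
    have hw : Continuous fun t : unitInterval => wFun x ↑t := by
      unfold wFun
      fun_prop
    exact ((continuous_const.div (continuous_norm.comp hw)
      (fun t => ne_of_gt (hwpos t))).smul hw)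
  have hs0 : swingFun x 0 = x := by
    have : wFun x 0 = x := by simp [wFun]
    rw [swingFun, this, div_self (ne_of_gt hxn), one_smul]
  have hs1 : swingFun x 1 = ‖x‖ • e2 := by
    have hw1 : wFun x 1 = ‖x‖ • e2 := by simp [wFun]
    rw [swingFun, hw1, norm_smul, norm_e2, mul_one, Real.norm_eq_abs, abs_of_pos hxn,
      div_self (ne_of_gt hxn), one_smul]
  refine ⟨⟨⟨fun t => swingFun x ↑t, hcont⟩, by simpa using hs0, by simpa using hs1⟩, ?_⟩
  rintro z ⟨t, rfl⟩
  have ht0 : (0:ℝ) ≤ ↑t := t.2.1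
  have ht1 : (↑t:ℝ) ≤ 1 := t.2.2
  have hwp := wFun_norm_pos x hx1 ht0 ht1
  have hfac : (0:ℝ) < ‖x‖ / ‖wFun x ↑t‖ := by positivity
  have hnorm : ‖swingFun x ↑t‖ = ‖x‖ := by
    rw [swingFun, norm_smul, Real.norm_eq_abs, abs_of_pos hfac,
      div_mul_cancel₀ _ (ne_of_gt hwp)]
  have hfac1 : (1:ℝ) ≤ ‖x‖ / ‖wFun x ↑t‖ :=
    (one_le_div hwp).2 (wFun_norm_le x ht0 ht1)
  have hcoord : swingFun x ↑t 1 = (‖x‖ / ‖wFun x ↑t‖) * wFun x ↑t 1 := by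
    simp [swingFun, PiLp.smul_apply, smul_eq_mul]
  refine ⟨?_, ?_, ?_⟩
  · show R + r ≤ ‖swingFun x ↑t‖
    rw [hnorm]; exact h1
  · show ‖swingFun x ↑t‖ ≤ 1 - r
    rw [hnorm]; exact h2
  · show r ≤ swingFun x ↑t 1
    rw [hcoord]
    calc r ≤ x 1 := h3
      _ ≤ wFun x ↑t 1 := wFun_coord_ge x ht0 ht1
      _ = 1 * wFun x ↑t 1 := (one_mul _).symm
      _ ≤ (‖x‖ / ‖wFun x ↑t‖) * wFun x ↑t 1 :=
          mul_le_mul_of_nonneg_right hfac1 (le_trans (le_of_lt hx1) (wFun_coord_ge x ht0 ht1))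

private lemma mid_path {R r a b : ℝ} (hR0 : 0 < R) (hr : 0 < r)
    (ha1 : R + r ≤ a) (ha2 : a ≤ 1 - r) (hb1 : R + r ≤ b) (hb2 : b ≤ 1 - r) :
    ∃ p : Path (a • e2) (b • e2), range p ⊆ GSet R r := by
  have key : ∀ t : ℝ, 0 ≤ t → t ≤ 1 → ((1 - t) * a + t * b) • e2 ∈ GSet R r := by
    intro t h0 h1
    have hval1 : R + r ≤ (1 - t) * a + t * b := by nlinarith
    have hval2 : (1 - t) * a + t * b ≤ 1 - r := by nlinarith
    have hnorm : ‖((1 - t) * a + t * b) • e2‖ = (1 - t) * a + t * b := by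
      rw [norm_smul, norm_e2, mul_one, Real.norm_eq_abs,
        abs_of_nonneg (by linarith)]
    refine ⟨by rw [hnorm]; exact hval1, by rw [hnorm]; exact hval2, ?_⟩
    have hcoord : (((1 - t) * a + t * b) • e2) 1 = (1 - t) * a + t * b := by
      simp [PiLp.smul_apply, e2_apply, smul_eq_mul]
    rw [hcoord]; nlinarith
  refine ⟨⟨⟨fun t : unitInterval => ((1 - ↑t) * a + ↑t * b) • e2, by fun_prop⟩,
    by norm_num, by norm_num⟩, ?_⟩
  rintro z ⟨t, rfl⟩
  exact key ↑t t.2.1 t.2.2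


/-- The upper half-annulus has no necks of any radius: any two balls of
radius `r` contained in `Ω'` can be joined by a continuous curve along which the ball of
radius `r` stays inside `Ω'`. -/
theorem halfAnnulus_no_necks {R : ℝ} (hR0 : 0 < R) (hR1 : R < 1)
    (r : ℝ) (hr : 0 < r) (x₀ x₁ : EucSp 2)
    (h₀ : ball x₀ r ⊆ halfAnn R) (h₁ : ball x₁ r ⊆ halfAnn R) :
    ∃ γ : ℝ → EucSp 2, ContinuousOn γ (Set.Icc 0 1) ∧
      γ 0 = x₀ ∧ γ 1 = x₁ ∧ ∀ t ∈ Set.Icc (0:ℝ) 1, ball (γ t) r ⊆ halfAnn R := by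
  have hx₀ := halfAnn_ball_cond hR0 hr h₀
  have hx₁ := halfAnn_ball_cond hR0 hr h₁
  obtain ⟨p₀, hp₀⟩ := swing_path hR0 hr hx₀
  obtain ⟨p₁, hp₁⟩ := swing_path hR0 hr hx₁
  obtain ⟨pm, hpm⟩ := mid_path (a := ‖x₀‖) (b := ‖x₁‖) hR0 hr hx₀.1 hx₀.2.1 hx₁.1 hx₁.2.1
  set p : Path x₀ x₁ := (p₀.trans pm).trans p₁.symm with hp
  have hrange : range p ⊆ GSet R r := by
    rw [hp, Path.trans_range, Path.trans_range, Path.symm_range]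
    exact union_subset (union_subset hp₀ hpm) hp₁
  refine ⟨p.extend, p.continuous_extend.continuousOn, p.extend_zero, p.extend_one, ?_⟩
  intro t ht
  have : p.extend t = p ⟨t, ht⟩ := p.extend_apply ht
  rw [this]
  exact ball_subset_halfAnn (hrange (mem_range_self _))


end
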